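/- arXiv:2010.05843 — 2 statements merged into one kernel-verified Lean document; each statement's English description precedes it below -/
import Mathlib

section
/- For γ > 1, the function g₂(γ) = 2γ²(4γ² − 3γ + 1)/(2γ − 1/2)³ satisfies g₂'(γ) < 1 for all γ > 1, and hence g₂(γ) ≤ g₂(1) + (γ − 1) = γ + 5/27 for all γ > 1. -/
/-! Writing `t = 4γ - 1`, one has `g₂'(γ) = 1 - 1/t² - 6/t³ - 6/t⁴`, which is `< 1` as soon as
`t > 0`. Hence `γ - g₂(γ)` is increasing on `(1/4, ∞)`, and `g₂(1) = 32/27` gives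
`g₂(γ) ≤ γ - 1 + 32/27` for `γ ≥ 1`. -/

namespace G2

noncomputable def g2 (x : ℝ) : ℝ := 2 * x ^ 2 * (4 * x ^ 2 - 3 * x + 1) / (2 * x - 1 / 2) ^ 3

theorem g2_one : g2 1 = 32 / 27 := by norm_num [g2]

theorem hasDerivAt_g2 {x : ℝ} (ht : 4 * x - 1 ≠ 0) :
    HasDerivAt g2 (1 - 1 / (4 * x - 1) ^ 2 - 6 / (4 * x - 1) ^ 3 - 6 / (4 * x - 1) ^ 4) x := by
  have hden : 2 * x - 1 / 2 ≠ 0 := fun h => ht (by linarith)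
  have hnum : HasDerivAt (fun x : ℝ => 2 * x ^ 2 * (4 * x ^ 2 - 3 * x + 1))
      (32 * x ^ 3 - 18 * x ^ 2 + 4 * x) x := by
    have hsq : HasDerivAt (fun x : ℝ => 2 * x ^ 2) (4 * x) x :=
      ((hasDerivAt_pow 2 x).const_mul 2).congr_deriv (by norm_num; ring)
    have hquad : HasDerivAt (fun x : ℝ => 4 * x ^ 2 - 3 * x + 1) (8 * x - 3) x :=
      ((((hasDerivAt_pow 2 x).const_mul 4).sub ((hasDerivAt_id' x).const_mul 3)).add_const
        1).congr_deriv (by norm_num; ring)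
    exact (hsq.mul hquad).congr_deriv (by ring)
  have hcube : HasDerivAt (fun x : ℝ => (2 * x - 1 / 2) ^ 3) (6 * (2 * x - 1 / 2) ^ 2) x :=
    ((((hasDerivAt_id' x).const_mul 2).sub_const (1 / 2)).pow 3).congr_deriv (by norm_num; ring)
  refine (hnum.div hcube (pow_ne_zero 3 hden)).congr_deriv ?_
  rw [show 2 * x - 1 / 2 = (4 * x - 1) / 2 by ring]
  generalize hxt : 4 * x - 1 = t at ht ⊢
  obtain rfl : x = (t + 1) / 4 := by linarith
  field_simp
  ring

theorem deriv_g2_lt_one {x : ℝ} (hx : 1 / 4 < x) : deriv g2 x < 1 := by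
  have ht : 0 < 4 * x - 1 := by linarith
  rw [(hasDerivAt_g2 ht.ne').deriv]
  have : 0 < 1 / (4 * x - 1) ^ 2 + 6 / (4 * x - 1) ^ 3 + 6 / (4 * x - 1) ^ 4 := by positivity
  linarith

theorem strictMonoOn_id_sub_g2 : StrictMonoOn (fun x => x - g2 x) (Set.Ioi (1 / 4)) := by
  have hderiv {x : ℝ} (hx : 1 / 4 < x) :
      HasDerivAt (fun x => x - g2 x) (1 - deriv g2 x) x := by
    have ht : 4 * x - 1 ≠ 0 := by linarith
    rw [(hasDerivAt_g2 ht).deriv]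
    exact (hasDerivAt_id x).sub (hasDerivAt_g2 ht)
  refine strictMonoOn_of_deriv_pos (convex_Ioi _)
    (fun x hx => (hderiv hx).continuousAt.continuousWithinAt) fun x hx => ?_
  rw [interior_Ioi] at hx
  rw [(hderiv hx).deriv, sub_pos]
  exact deriv_g2_lt_one hx

theorem g2_le_add {x : ℝ} (hx : 1 ≤ x) : g2 x ≤ x + 5 / 27 := by
  have := strictMonoOn_id_sub_g2.monotoneOn (by norm_num : (1 : ℝ) ∈ Set.Ioi (1 / 4))
    (show x ∈ Set.Ioi (1 / 4) by simp only [Set.mem_Ioi]; linarith) hx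
  rw [g2_one] at this
  linarith

end G2

open G2 in
/-- `g₂(γ) = 2γ²(4γ² − 3γ + 1)/(2γ − 1/2)³` has derivative `< 1` for all `γ > 1`, and hence
`g₂(γ) ≤ g₂(1) + (γ − 1) = γ + 5/27` for all `γ > 1`. -/
theorem g2_deriv_lt_one_and_bound :
    (∀ γ : ℝ, 1 < γ →
        deriv (fun x : ℝ => 2 * x ^ 2 * (4 * x ^ 2 - 3 * x + 1) / (2 * x - 1 / 2) ^ 3) γ < 1) ∧
      ∀ γ : ℝ, 1 < γ →
        2 * γ ^ 2 * (4 * γ ^ 2 - 3 * γ + 1) / (2 * γ - 1 / 2) ^ 3 ≤ γ + 5 / 27 :=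
  ⟨fun γ hγ => deriv_g2_lt_one (by linarith), fun γ hγ => g2_le_add hγ.le⟩
end

section
/- For γ = 1, the infimum over λ > 0 of f(λ, 1) = 8λ / ((λ + 2 − √(λ² + 4λ))² · (λ² + 4λ)^{3/2}) equals 32/27. -/
/-!
Put `t = √(1 + 4/λ)`, so that `λ (t² - 1) = 4`. Then `√(λ² + 4λ) = λ t` and
`λ + 2 - λ t = λ (t - 1)² / 2`, and `f(λ, 1)` collapses to `(t + 1)⁴ / (8 t³)`. By AM-GM on
`t/3, t/3, t/3, 1` this is at least `32/27`, with equality at `t = 3`, i.e. `λ = 1/2`.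
-/

open Real

noncomputable def fGammaOne (l : ℝ) : ℝ :=
  8 * l / ((l + 2 - √(l ^ 2 + 4 * l)) ^ 2 * (l ^ 2 + 4 * l) ^ ((3 : ℝ) / 2))

theorem fGammaOne_eq_of_mul_sq_eq {l t : ℝ} (hl : 0 < l) (ht : 0 < t) (hlt : l * t ^ 2 = l + 4) :
    fGammaOne l = (t + 1) ^ 4 / (8 * t ^ 3) := by
  have hsq : l ^ 2 + 4 * l = (l * t) ^ 2 := by linear_combination -l * hlt
  have hsqrt : √(l ^ 2 + 4 * l) = l * t := by rw [hsq, sqrt_sq (by positivity)]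
  have hrpow : (l ^ 2 + 4 * l) ^ ((3 : ℝ) / 2) = (l * t) ^ 3 := by
    rw [rpow_div_two_eq_sqrt _ (by positivity), hsqrt]
    norm_cast
  have hgap : l + 2 - l * t = l * (t - 1) ^ 2 / 2 := by linear_combination -hlt / 2
  have hprod : l * (t - 1) * (t + 1) = 4 := by linear_combination hlt
  have hne : t - 1 ≠ 0 := by rintro h; rw [h] at hprod; simp at hprod
  rw [fGammaOne, hsqrt, hrpow, hgap]
  field_simp
  rw [show l ^ 4 * (t - 1) ^ 4 * (t + 1) ^ 4 = (l * (t - 1) * (t + 1)) ^ 4 by ring, hprod]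
  norm_num

theorem thirtyTwo_div_twentySeven_le {t : ℝ} (ht : 0 < t) :
    32 / 27 ≤ (t + 1) ^ 4 / (8 * t ^ 3) := by
  rw [le_div_iff₀ (by positivity)]
  -- `27 (t + 1) ^ 4 - 256 t ^ 3 = (t - 3) ^ 2 (27 t ^ 2 + 14 t + 3)`
  nlinarith [mul_nonneg (sq_nonneg (t - 3)) (by positivity : (0 : ℝ) ≤ 27 * t ^ 2 + 14 * t + 3)]

theorem fGammaOne_half : fGammaOne (1 / 2) = 32 / 27 := by
  rw [fGammaOne_eq_of_mul_sq_eq (t := 3) (by norm_num) (by norm_num) (by norm_num)]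
  norm_num

/-- For `γ = 1`, the infimum over `λ > 0` of
`f(λ,1) = 8λ/((λ + 2 − √(λ²+4λ))² (λ²+4λ)^{3/2})` equals `32/27`. -/
theorem inf_f_at_gamma_one :
    IsGLB {y : ℝ | ∃ l : ℝ, 0 < l ∧
        y = 8 * l / ((l + 2 - Real.sqrt (l ^ 2 + 4 * l)) ^ 2 *
          (l ^ 2 + 4 * l) ^ ((3 : ℝ) / 2))}
      (32 / 27) := by
  change IsGLB {y | ∃ l, 0 < l ∧ y = fGammaOne l} (32 / 27)
  refine ⟨?_, fun b hb => hb ⟨1 / 2, by norm_num, fGammaOne_half.symm⟩⟩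
  rintro _ ⟨l, hl, rfl⟩
  have hlt : l * √(1 + 4 / l) ^ 2 = l + 4 := by
    rw [sq_sqrt (by positivity)]
    field_simp
  rw [fGammaOne_eq_of_mul_sq_eq hl (by positivity) hlt]
  exact thirtyTwo_div_twentySeven_le (by positivity)
end
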